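/- Let ε > 0, ξ ≥ 0, η ≥ 0, and let F : ℝ^K × ℝ^n → ℝ be twice continuously differentiable. Let (ω*, θ*) ∈ ℝ^K × ℝ^n satisfy ∇_θ F(ω*, θ*) = 0, set A := ∇²_{θθ} F(ω*, θ*), and assume ‖∇_θ F(ω, θ*)‖ ≤ η‖ω − ω*‖ for all ω ∈ ℝ^K. Let sequences (ω^{(t)})_{t≥1} ⊂ ℝ^K and (θ^{(t)})_{t≥1} ⊂ ℝ^n satisfy the gradient-descent recursion θ^{(t+1)} = θ^{(t)} − ε ∇_θ F(ω^{(t)}, θ^{(t)}), with θ^{(t)} → θ*, ω^{(t)} → ω*, θ^{(t)} ≠ θ* for all t, and ‖ω^{(t)} − ω*‖ ≤ ξ‖θ^{(t)} − θ*‖ for all t. If c := ‖I − εA‖_op + εξη < 1, then limsup_{t→∞} ‖θ^{(t+1)} − θ*‖ / ‖θ^{(t)} − θ*‖ ≤ c; in particular this limsup is at most 1, and for every c' ∈ (c, 1) there exists T such that ‖θ^{(t+1)} − θ*‖ ≤ c'‖θ^{(t)} − θ*‖ for all t ≥ T. -/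

import Mathlib

/-- Convergence rate for the follower's gradient-descent iterates toward a local
Stackelberg equilibrium: if `c = ‖I − εA‖ + εξη < 1`, where `A` is the Hessian of
`F(ω*, ·)` at `θ*`, then `limsup_t ‖θ^{t+1} − θ*‖ / ‖θ^t − θ*‖ ≤ c ≤ 1`, and for every
`c' ∈ (c, 1)` the contraction `‖θ^{t+1} − θ*‖ ≤ c'‖θ^t − θ*‖` eventually holds. -/
theorem follower_convergence_rate (K n : ℕ) (ε ξ η : ℝ) (hε : 0 < ε) (hξ : 0 ≤ ξ) (hη : 0 ≤ η)
    (F : EuclideanSpace ℝ (Fin K) → EuclideanSpace ℝ (Fin n) → ℝ)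
    (hF : ContDiff ℝ 2
      (fun p : EuclideanSpace ℝ (Fin K) × EuclideanSpace ℝ (Fin n) => F p.1 p.2))
    (ωs : EuclideanSpace ℝ (Fin K)) (θs : EuclideanSpace ℝ (Fin n))
    (hcrit : gradient (F ωs) θs = 0)
    (A : EuclideanSpace ℝ (Fin n) →L[ℝ] EuclideanSpace ℝ (Fin n))
    (hA : A = fderiv ℝ (fun θ => gradient (F ωs) θ) θs)
    (hgrad : ∀ ω, ‖gradient (F ω) θs‖ ≤ η * ‖ω - ωs‖)
    (ω : ℕ → EuclideanSpace ℝ (Fin K)) (θ : ℕ → EuclideanSpace ℝ (Fin n))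
    (hrec : ∀ t, θ (t + 1) = θ t - ε • gradient (F (ω t)) (θ t))
    (hθ : Filter.Tendsto θ Filter.atTop (nhds θs))
    (hω : Filter.Tendsto ω Filter.atTop (nhds ωs))
    (hne : ∀ t, θ t ≠ θs)
    (htrack : ∀ t, ‖ω t - ωs‖ ≤ ξ * ‖θ t - θs‖)
    (c : ℝ)
    (hc : c = ‖ContinuousLinearMap.id ℝ (EuclideanSpace ℝ (Fin n)) - ε • A‖ + ε * ξ * η)
    (hc1 : c < 1) :
    Filter.limsup (fun t => ‖θ (t + 1) - θs‖ / ‖θ t - θs‖) Filter.atTop ≤ c ∧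
    Filter.limsup (fun t => ‖θ (t + 1) - θs‖ / ‖θ t - θs‖) Filter.atTop ≤ 1 ∧
    ∀ c', c < c' → c' < 1 → ∃ T, ∀ t ≥ T, ‖θ (t + 1) - θs‖ ≤ c' * ‖θ t - θs‖ := by
  set F2 : EuclideanSpace ℝ (Fin K) × EuclideanSpace ℝ (Fin n) → ℝ :=
    fun p => F p.1 p.2 with hF2
  set G : EuclideanSpace ℝ (Fin K) × EuclideanSpace ℝ (Fin n) → EuclideanSpace ℝ (Fin n) :=
    fun p => gradient (F p.1) p.2 with hGdef
  set inr2 := ContinuousLinearMap.inr ℝ (EuclideanSpace ℝ (Fin K)) (EuclideanSpace ℝ (Fin n))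
    with hinr2
  -- partial fderiv of F2 in second variable
  have hpart : ∀ p : EuclideanSpace ℝ (Fin K) × EuclideanSpace ℝ (Fin n),
      HasFDerivAt (fun x => F2 (p.1, x)) ((fderiv ℝ F2 p).comp inr2) p.2 := by
    intro p
    have h := ((hF.differentiable two_ne_zero) p).hasFDerivAt
    exact h.comp (f := fun y => (p.1, y)) p.2 (hasFDerivAt_prodMk_right p.1 p.2)
  have hGeq : ∀ p : EuclideanSpace ℝ (Fin K) × EuclideanSpace ℝ (Fin n),
      G p = (InnerProductSpace.toDual ℝ (EuclideanSpace ℝ (Fin n))).symm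
        ((fderiv ℝ F2 p).comp inr2) := by
    intro p
    have : fderiv ℝ (F p.1) p.2 = (fderiv ℝ F2 p).comp inr2 := (hpart p).fderiv
    simp only [hGdef, gradient, this]
  have hG : ContDiff ℝ 1 G := by
    rw [funext hGeq]
    exact ((InnerProductSpace.toDual ℝ (EuclideanSpace ℝ (Fin n))).symm.contDiff).comp
      ((hF.fderiv_right (by norm_num)).clm_comp contDiff_const)
  -- partial fderiv of G in second variable
  have hGpart : ∀ p : EuclideanSpace ℝ (Fin K) × EuclideanSpace ℝ (Fin n),
      HasFDerivAt (fun x => G (p.1, x)) ((fderiv ℝ G p).comp inr2) p.2 := by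
    intro p
    have h := ((hG.differentiable one_ne_zero) p).hasFDerivAt
    exact h.comp (f := fun y => (p.1, y)) p.2 (hasFDerivAt_prodMk_right p.1 p.2)
  have hA' : A = (fderiv ℝ G (ωs, θs)).comp inr2 := by
    rw [hA]
    have h := (hGpart (ωs, θs)).fderiv
    show fderiv ℝ (fun x => G (ωs, x)) θs = _
    simpa using h
  -- continuity of the partial Hessian
  have hcont0 : Continuous fun p : EuclideanSpace ℝ (Fin K) × EuclideanSpace ℝ (Fin n) =>
      (fderiv ℝ G p).comp inr2 :=
    (hG.continuous_fderiv one_ne_zero).clm_comp (continuous_const : Continuous fun _ => inr2)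
  have hcont : Continuous fun p : EuclideanSpace ℝ (Fin K) × EuclideanSpace ℝ (Fin n) =>
      ‖(fderiv ℝ G p).comp inr2 - A‖ := (hcont0.sub continuous_const).norm
  have hpos : ∀ t, 0 < ‖θ t - θs‖ := fun t => norm_sub_pos_iff.mpr (hne t)
  -- key eventual estimate
  have key : ∀ δ : ℝ, 0 < δ → ∀ᶠ t in Filter.atTop,
      ‖θ (t + 1) - θs‖ ≤ (c + ε * δ) * ‖θ t - θs‖ := by
    intro δ hδ
    have h0 : ‖(fderiv ℝ G (ωs, θs)).comp inr2 - A‖ = 0 := by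
      rw [hA', sub_self, norm_zero]
    obtain ⟨r, hr, hball⟩ := (Metric.continuousAt_iff.mp hcont.continuousAt) δ hδ
    have hωev : ∀ᶠ t in Filter.atTop, dist (ω t) ωs < r := (Metric.tendsto_nhds.mp hω) r hr
    have hθev : ∀ᶠ t in Filter.atTop, dist (θ t) θs < r := (Metric.tendsto_nhds.mp hθ) r hr
    filter_upwards [hωev, hθev] with t hωt hθt
    -- mean value on the segment
    set g : EuclideanSpace ℝ (Fin n) → EuclideanSpace ℝ (Fin n) :=
      fun x => G (ω t, x) - A x with hg
    have hseg : ∀ x ∈ segment ℝ θs (θ t), ‖x - θs‖ ≤ ‖θ t - θs‖ := by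
      intro x hx
      have := (convex_closedBall θs ‖θ t - θs‖).segment_subset
        (Metric.mem_closedBall.mpr (by simp))
        (Metric.mem_closedBall.mpr (by rw [dist_eq_norm])) hx
      simpa [Metric.mem_closedBall, dist_eq_norm] using this
    have hbound : ∀ x ∈ segment ℝ θs (θ t),
        ‖(fderiv ℝ G (ω t, x)).comp inr2 - A‖ ≤ δ := by
      intro x hx
      have hdx : dist x θs < r := by
        rw [dist_eq_norm]; rw [dist_eq_norm] at hθt
        exact lt_of_le_of_lt (hseg x hx) hθt
      have hdist : dist ((ω t, x) : EuclideanSpace ℝ (Fin K) × EuclideanSpace ℝ (Fin n))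
          (ωs, θs) < r := by
        rw [Prod.dist_eq]; exact max_lt hωt hdx
      have := hball hdist
      rw [Real.dist_eq, h0, sub_zero] at this
      exact le_of_lt (lt_of_abs_lt this)
    have hder : ∀ x ∈ segment ℝ θs (θ t), HasFDerivWithinAt g
        ((fderiv ℝ G (ω t, x)).comp inr2 - A) (segment ℝ θs (θ t)) x := fun x _ =>
      ((hGpart (ω t, x)).sub A.hasFDerivAt).hasFDerivWithinAt
    have hmv := (convex_segment θs (θ t)).norm_image_sub_le_of_norm_hasFDerivWithin_le
      hder hbound (left_mem_segment ℝ θs (θ t)) (right_mem_segment ℝ θs (θ t))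
    have hstep : θ (t + 1) - θs =
        (ContinuousLinearMap.id ℝ (EuclideanSpace ℝ (Fin n)) - ε • A) (θ t - θs)
          - ε • (g (θ t) - g θs) - ε • G (ω t, θs) := by
      rw [hrec t]
      show θ t - ε • G (ω t, θ t) - θs = _
      simp only [hg, ContinuousLinearMap.sub_apply, ContinuousLinearMap.smul_apply,
        ContinuousLinearMap.id_apply, map_sub, smul_sub]
      abel
    have hGθs : ‖G (ω t, θs)‖ ≤ η * (ξ * ‖θ t - θs‖) :=
      (hgrad (ω t)).trans (mul_le_mul_of_nonneg_left (htrack t) hη)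
    have hIA : ‖(ContinuousLinearMap.id ℝ (EuclideanSpace ℝ (Fin n)) - ε • A) (θ t - θs)‖ ≤
        ‖ContinuousLinearMap.id ℝ (EuclideanSpace ℝ (Fin n)) - ε • A‖ * ‖θ t - θs‖ :=
      ContinuousLinearMap.le_opNorm _ _
    have habs : ∀ v : EuclideanSpace ℝ (Fin n), ‖ε • v‖ = ε * ‖v‖ := by
      intro v; rw [norm_smul, Real.norm_eq_abs, abs_of_pos hε]
    calc ‖θ (t + 1) - θs‖
        ≤ ‖(ContinuousLinearMap.id ℝ (EuclideanSpace ℝ (Fin n)) - ε • A) (θ t - θs)‖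
            + ε * ‖g (θ t) - g θs‖ + ε * ‖G (ω t, θs)‖ := by
          rw [hstep]
          refine (norm_sub_le _ _).trans ?_
          rw [habs]
          gcongr
          refine (norm_sub_le _ _).trans ?_
          rw [habs]
      _ ≤ ‖ContinuousLinearMap.id ℝ (EuclideanSpace ℝ (Fin n)) - ε • A‖ * ‖θ t - θs‖
            + ε * (δ * ‖θ t - θs‖) + ε * (η * (ξ * ‖θ t - θs‖)) := by
          gcongr
      _ = (c + ε * δ) * ‖θ t - θs‖ := by rw [hc]; ring
  -- deduce the three conclusions
  have hratio : ∀ δ : ℝ, 0 < δ → ∀ᶠ t in Filter.atTop,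
      ‖θ (t + 1) - θs‖ / ‖θ t - θs‖ ≤ c + ε * δ := by
    intro δ hδ
    filter_upwards [key δ hδ] with t ht
    rw [div_le_iff₀ (hpos t)]
    exact ht
  have hcobdd : Filter.IsCoboundedUnder (· ≤ ·) Filter.atTop
      (fun t => ‖θ (t + 1) - θs‖ / ‖θ t - θs‖) :=
    Filter.IsBoundedUnder.isCoboundedUnder_le
      ⟨0, Filter.eventually_map.mpr (Filter.Eventually.of_forall fun t =>
        div_nonneg (norm_nonneg _) (norm_nonneg _))⟩
  have hls : Filter.limsup (fun t => ‖θ (t + 1) - θs‖ / ‖θ t - θs‖) Filter.atTop ≤ c := by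
    refine le_of_forall_pos_le_add fun δ' hδ' => ?_
    have h := Filter.limsup_le_of_le hcobdd (hratio (δ' / ε) (div_pos hδ' hε))
    have heq : c + ε * (δ' / ε) = c + δ' := by field_simp
    rwa [heq] at h
  refine ⟨hls, hls.trans hc1.le, fun c' hcc' hc'1 => ?_⟩
  have hδ : (0 : ℝ) < (c' - c) / ε := div_pos (by linarith) hε
  obtain ⟨T, hT⟩ := Filter.eventually_atTop.mp (key _ hδ)
  refine ⟨T, fun t ht => ?_⟩
  have h := hT t ht
  have heq : c + ε * ((c' - c) / ε) = c' := by field_simp; ring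
  rwa [heq] at h
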